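/- On the Heisenberg group H = ℂⁿ × ℝ with coordinates (z,t), let ρ = (|z|⁴ + t²)^{1/4} be the Heisenberg norm and Z_α = ∂/∂z^α + i z̄^α ∂/∂t. Then the function u = log ρ satisfies: ∑_α (Z_α Z̄_α + Z̄_α Z_α)(log ρ) − 2n ∑_α |Z_α log ρ|² = (n/2)·|z|²/ρ⁴, where Z̄_α = ∂/∂z̄^α − i z^α ∂/∂t. Consequently the Tanaka–Webster scalar curvature of the contact form θ = ρ^{-2}θ₀ equals R = n(n+1)|z|²/(2ρ²), which is nonnegative and vanishes exactly on the set z = 0. -/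

import Mathlib

open scoped BigOperators ComplexConjugate

/-- Wirtinger derivative `∂/∂z^α` on the Heisenberg group `ℂⁿ × ℝ`. -/
noncomputable def wdz {n : ℕ} (a : Fin n) (f : ((Fin n → ℂ) × ℝ) → ℂ)
    (p : (Fin n → ℂ) × ℝ) : ℂ :=
  (1 / 2) * (fderiv ℝ f p (Pi.single a 1, 0)
    - Complex.I * fderiv ℝ f p (Pi.single a Complex.I, 0))

/-- Wirtinger derivative `∂/∂z̄^α` on the Heisenberg group `ℂⁿ × ℝ`. -/
noncomputable def wdzbar {n : ℕ} (a : Fin n) (f : ((Fin n → ℂ) × ℝ) → ℂ)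
    (p : (Fin n → ℂ) × ℝ) : ℂ :=
  (1 / 2) * (fderiv ℝ f p (Pi.single a 1, 0)
    + Complex.I * fderiv ℝ f p (Pi.single a Complex.I, 0))

/-- Derivative `∂/∂t` on the Heisenberg group `ℂⁿ × ℝ`. -/
noncomputable def wdt {n : ℕ} (f : ((Fin n → ℂ) × ℝ) → ℂ)
    (p : (Fin n → ℂ) × ℝ) : ℂ :=
  fderiv ℝ f p (0, 1)

/-- The CR vector field `Z_α = ∂/∂z^α + i z̄^α ∂/∂t`. -/
noncomputable def Zop {n : ℕ} (a : Fin n) (f : ((Fin n → ℂ) × ℝ) → ℂ)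
    (p : (Fin n → ℂ) × ℝ) : ℂ :=
  wdz a f p + Complex.I * conj (p.1 a) * wdt f p

/-- The conjugate CR vector field `Z̄_α = ∂/∂z̄^α − i z^α ∂/∂t`. -/
noncomputable def Zbarop {n : ℕ} (a : Fin n) (f : ((Fin n → ℂ) × ℝ) → ℂ)
    (p : (Fin n → ℂ) × ℝ) : ℂ :=
  wdzbar a f p - Complex.I * (p.1 a) * wdt f p

/-- The Heisenberg norm `ρ = (|z|⁴ + t²)^{1/4}`. -/
noncomputable def heisRho {n : ℕ} (p : (Fin n → ℂ) × ℝ) : ℝ :=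
  ((∑ a, Complex.normSq (p.1 a)) ^ 2 + p.2 ^ 2) ^ ((1 : ℝ) / 4)

/-- `u = log ρ` (as a complex-valued function). -/
noncomputable def heisU {n : ℕ} (p : (Fin n → ℂ) × ℝ) : ℂ :=
  (Real.log (heisRho p) : ℂ)

/-! The complex gauge `w = |z|² + i t` satisfies `Z_α w = 0` and `Z_α w̄ = 2 z̄_α`, and
`ρ⁴ = |w|²`. Hence `log ρ = ¼ log (w w̄)` gives `Z_α log ρ = z̄_α / (2 w̄)` and, by conjugation,
`Z̄_α log ρ = z_α / (2 w)`. Differentiating once more, `Z_α (z_α / (2 w)) = 1 / (2 w)`, so the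
second order terms add up to `n · 2 Re (1 / (2 w)) = n |z|² / ρ⁴`, while
`2n ∑ |Z_α log ρ|² = n |z|² / (2 ρ⁴)`. -/

section

open Complex

variable {n : ℕ} {a : Fin n} {p : (Fin n → ℂ) × ℝ} {f g : (Fin n → ℂ) × ℝ → ℂ}

theorem Zop_add (hf : DifferentiableAt ℝ f p) (hg : DifferentiableAt ℝ g p) :
    Zop a (fun q => f q + g q) p = Zop a f p + Zop a g p := by
  simp only [Zop, wdz, wdt, fderiv_fun_add hf hg, add_apply]
  ring

theorem Zop_mul (hf : DifferentiableAt ℝ f p) (hg : DifferentiableAt ℝ g p) :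
    Zop a (fun q => f q * g q) p = Zop a f p * g p + f p * Zop a g p := by
  simp only [Zop, wdz, wdt, fderiv_fun_mul hf hg, add_apply, smul_apply, smul_eq_mul]
  ring

theorem Zop_mul_const (hf : DifferentiableAt ℝ f p) (c : ℂ) :
    Zop a (fun q => f q * c) p = Zop a f p * c := by
  simp only [Zop, wdz, wdt, fderiv_mul_const hf, smul_apply, smul_eq_mul]
  ring

theorem Zop_comp {φ : ℂ → ℂ} {φ' : ℂ} (hφ : HasDerivAt φ φ' (f p))
    (hf : DifferentiableAt ℝ f p) : Zop a (fun q => φ (f q)) p = φ' * Zop a f p := by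
  have h : fderiv ℝ (fun q => φ (f q)) p = φ' • fderiv ℝ f p :=
    (hφ.comp_hasFDerivAt p hf.hasFDerivAt).fderiv
  simp only [Zop, wdz, wdt, h, smul_apply, smul_eq_mul]
  ring

theorem Zop_sum {ι : Type*} (s : Finset ι) {F : ι → (Fin n → ℂ) × ℝ → ℂ}
    (hF : ∀ i ∈ s, DifferentiableAt ℝ (F i) p) :
    Zop a (fun q => ∑ i ∈ s, F i q) p = ∑ i ∈ s, Zop a (F i) p := by
  simp only [Zop, wdz, wdt, fderiv_fun_sum hF, sum_apply, Finset.mul_sum,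
    ← Finset.sum_sub_distrib, ← Finset.sum_add_distrib]

theorem Zop_congr (h : f =ᶠ[nhds p] g) : Zop a f p = Zop a g p := by
  simp only [Zop, wdz, wdt, h.fderiv_eq]

theorem Zbarop_eq_conj_Zop : Zbarop a f p = conj (Zop a (fun q => conj (f q)) p) := by
  have h : fderiv ℝ (fun q => conj (f q)) p =
      (conjCLE : ℂ ≃L[ℝ] ℂ).toContinuousLinearMap.comp (fderiv ℝ f p) :=
    conjCLE.comp_fderiv (f := f)
  simp only [Zbarop, wdzbar, one_div, wdt, Zop, wdz, h, ContinuousLinearMap.comp_apply,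
    ContinuousLinearEquiv.coe_coe, ContinuousAlgEquiv.coeCLE_apply, conjCAE_apply, map_add, map_mul,
    map_inv₀, conj_ofNat, map_sub, RingHomCompTriple.comp_apply, RingHom.id_apply, conj_I]
  ring

theorem Zop_coord (b : Fin n) : Zop a (fun q => q.1 b) p = (Pi.single a 1 : Fin n → ℂ) b := by
  have h : (fun q : (Fin n → ℂ) × ℝ => q.1 b) =
      ⇑((ContinuousLinearMap.proj b).comp (ContinuousLinearMap.fst ℝ (Fin n → ℂ) ℝ)) := rfl
  rw [h]
  simp only [Zop, wdz, wdt, ContinuousLinearMap.fderiv]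
  by_cases hab : b = a
  · subst hab
    simp only [ContinuousLinearMap.comp_apply, ContinuousLinearMap.coe_fst',
      ContinuousLinearMap.proj_apply, Pi.single_eq_same, I_mul_I, Pi.zero_apply, mul_zero, add_zero]
    ring
  · simp [hab]

theorem Zop_conj_coord (b : Fin n) : Zop a (fun q => conj (q.1 b)) p = 0 := by
  have h : (fun q : (Fin n → ℂ) × ℝ => conj (q.1 b)) =
      ⇑((conjCLE : ℂ ≃L[ℝ] ℂ).toContinuousLinearMap.comp
        ((ContinuousLinearMap.proj b).comp (ContinuousLinearMap.fst ℝ (Fin n → ℂ) ℝ))) := rfl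
  rw [h]
  simp only [Zop, wdz, wdt, ContinuousLinearMap.fderiv]
  by_cases hab : b = a
  · subst hab; simp
  · simp [hab]

theorem differentiableAt_ofReal_snd : DifferentiableAt ℝ (fun q : (Fin n → ℂ) × ℝ => (q.2 : ℂ)) p :=
  ofRealCLM.differentiableAt.comp p differentiableAt_snd

theorem Zop_ofReal_snd : Zop a (fun q => (q.2 : ℂ)) p = I * conj (p.1 a) := by
  have h : (fun q : (Fin n → ℂ) × ℝ => (q.2 : ℂ)) =
      ⇑(ofRealCLM.comp (ContinuousLinearMap.snd ℝ (Fin n → ℂ) ℝ)) := rfl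
  rw [h]
  simp [Zop, wdz, wdt, ContinuousLinearMap.fderiv]

noncomputable def heisW (p : (Fin n → ℂ) × ℝ) : ℂ := ∑ b, p.1 b * conj (p.1 b) + p.2 * I

theorem heisW_eq (p : (Fin n → ℂ) × ℝ) : heisW p = ((∑ b, normSq (p.1 b) : ℝ) : ℂ) + p.2 * I := by
  simp [heisW, mul_conj]

theorem differentiableAt_heisW : DifferentiableAt ℝ heisW p := by
  have := differentiableAt_ofReal_snd (p := p)
  unfold heisW
  fun_prop

theorem differentiableAt_conj_heisW : DifferentiableAt ℝ (fun q => conj (heisW q)) p := by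
  have := differentiableAt_heisW (p := p)
  fun_prop

theorem Zop_sum_mul_conj : Zop a (fun q => ∑ b, q.1 b * conj (q.1 b)) p = conj (p.1 a) := by
  rw [Zop_sum _ fun b _ => by fun_prop,
    Finset.sum_congr rfl fun b _ => Zop_mul (by fun_prop) (by fun_prop)]
  simp [Zop_coord, Zop_conj_coord, Pi.single_apply]

theorem Zop_heisW : Zop a heisW p = 0 := by
  have ht := differentiableAt_ofReal_snd (p := p)
  unfold heisW
  rw [Zop_add (by fun_prop) (by fun_prop), Zop_sum_mul_conj, Zop_mul_const ht, Zop_ofReal_snd]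
  ring_nf; simp

theorem conj_heisW (p : (Fin n → ℂ) × ℝ) :
    conj (heisW p) = ∑ b, p.1 b * conj (p.1 b) + p.2 * (-I) := by
  simp [heisW_eq, mul_conj, ← sub_eq_add_neg]

theorem Zop_conj_heisW : Zop a (fun q => conj (heisW q)) p = 2 * conj (p.1 a) := by
  have ht := differentiableAt_ofReal_snd (p := p)
  simp only [conj_heisW]
  rw [Zop_add (by fun_prop) (by fun_prop), Zop_sum_mul_conj, Zop_mul_const ht, Zop_ofReal_snd]
  ring_nf
  simp only [I_sq]
  ring

theorem sum_normSq_eq_zero_iff (z : Fin n → ℂ) : ∑ b, normSq (z b) = 0 ↔ z = 0 := by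
  simp [Finset.sum_eq_zero_iff_of_nonneg fun b _ => normSq_nonneg (z b), funext_iff]

theorem normSq_heisW (p : (Fin n → ℂ) × ℝ) :
    normSq (heisW p) = (∑ b, normSq (p.1 b)) ^ 2 + p.2 ^ 2 := by
  rw [heisW_eq, normSq_add_mul_I]

theorem heisW_ne_zero (hp : p ≠ 0) : heisW p ≠ 0 := by
  intro hw
  have hre := congrArg re hw
  have him := congrArg im hw
  simp only [heisW_eq, add_re, add_im, ofReal_re, ofReal_im, mul_re, mul_im, I_re, I_im] at hre him
  simp only [mul_zero, mul_one, sub_zero, zero_add, zero_re, zero_im, add_zero] at hre him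
  exact hp (Prod.ext ((sum_normSq_eq_zero_iff p.1).1 hre) him)

theorem heisRho_pow_four (p : (Fin n → ℂ) × ℝ) : heisRho p ^ 4 = normSq (heisW p) := by
  rw [heisRho, ← normSq_heisW, ← Real.rpow_natCast, ← Real.rpow_mul (normSq_nonneg _)]
  norm_num

theorem heisU_eq_log (hp : p ≠ 0) : heisU p = log (heisW p * conj (heisW p)) / 4 := by
  have hN : 0 < normSq (heisW p) := normSq_pos.2 (heisW_ne_zero hp)
  rw [heisU, heisRho, ← normSq_heisW, Real.log_rpow hN, mul_conj, ← ofReal_log hN.le]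
  push_cast
  ring

theorem Zop_comp_heisW {φ : ℂ → ℂ} (hφ : DifferentiableAt ℂ φ (heisW p)) :
    Zop a (fun q => φ (heisW q)) p = 0 := by
  rw [Zop_comp hφ.hasDerivAt differentiableAt_heisW, Zop_heisW, mul_zero]

theorem Zop_heisU (hp : p ≠ 0) : Zop a heisU p = conj (p.1 a / (2 * heisW p)) := by
  have hw := heisW_ne_zero hp
  have hw' : conj (heisW p) ≠ 0 := (map_ne_zero _).2 hw
  have hslit : heisW p * conj (heisW p) ∈ slitPlane := by
    rw [mul_conj]; exact ofReal_mem_slitPlane.2 (normSq_pos.2 hw)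
  have hN : DifferentiableAt ℝ (fun q => heisW q * conj (heisW q)) p :=
    differentiableAt_heisW.mul differentiableAt_conj_heisW
  rw [Zop_congr ((eventually_ne_nhds hp).mono fun q hq => heisU_eq_log hq),
    Zop_comp ((hasDerivAt_log hslit).div_const 4) hN,
    Zop_mul differentiableAt_heisW differentiableAt_conj_heisW, Zop_heisW, Zop_conj_heisW]
  simp only [map_div₀, map_mul, conj_ofNat]
  field_simp
  ring

theorem Zbarop_heisU (hp : p ≠ 0) : Zbarop a heisU p = p.1 a / (2 * heisW p) := by
  have h : (fun q => conj (heisU q)) = heisU (n := n) := funext fun q => conj_ofReal _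
  rw [Zbarop_eq_conj_Zop, h, Zop_heisU hp, conj_conj]

theorem Zop_coord_div_heisW (hp : p ≠ 0) :
    Zop a (fun q => q.1 a / (2 * heisW q)) p = 1 / (2 * heisW p) := by
  have hφ : DifferentiableAt ℂ (fun z : ℂ => (2 * z)⁻¹) (heisW p) := by
    have := heisW_ne_zero hp
    fun_prop (disch := simpa)
  have hφW : DifferentiableAt ℝ (fun q => (2 * heisW q)⁻¹) p :=
    (hφ.restrictScalars ℝ).comp p differentiableAt_heisW
  simp only [div_eq_mul_inv]
  rw [Zop_mul (by fun_prop) hφW, Zop_comp_heisW hφ, Zop_coord]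
  simp

theorem sublaplacian_log_heisRho (hp : p ≠ 0) :
    (∑ a, (Zop a (Zbarop a heisU) p + Zbarop a (Zop a heisU) p))
        - 2 * (n : ℂ) * ∑ a, Zop a heisU p * conj (Zop a heisU p)
      = ((n : ℂ) / 2) * ((∑ a, normSq (p.1 a) : ℝ) : ℂ) / ((heisRho p : ℂ)) ^ 4 := by
  have hZZbar : ∀ a, Zop a (Zbarop a heisU) p = 1 / (2 * heisW p) := fun a => by
    rw [Zop_congr ((eventually_ne_nhds hp).mono fun q hq => Zbarop_heisU hq),
      Zop_coord_div_heisW hp]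
  have hZbarZ : ∀ a, Zbarop a (Zop a heisU) p = conj (1 / (2 * heisW p)) := fun a => by
    rw [Zbarop_eq_conj_Zop, Zop_congr ((eventually_ne_nhds hp).mono fun q hq => by
      rw [Zop_heisU hq, conj_conj]), Zop_coord_div_heisW hp]
  have hZnormSq : ∀ a, Zop a heisU p * conj (Zop a heisU p)
      = normSq (p.1 a) / (4 * normSq (heisW p)) := fun a => by
    rw [Zop_heisU hp, conj_conj, mul_comm, mul_conj, normSq_div, normSq_mul]
    push_cast
    norm_num [normSq_ofNat]
  have hW := heisW_ne_zero hp
  have hW' : conj (heisW p) ≠ 0 := (map_ne_zero _).2 hW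
  have hsum : ((∑ a, normSq (p.1 a) : ℝ) : ℂ) = (heisW p + conj (heisW p)) / 2 := by
    rw [add_conj, heisW_eq]
    simp
  simp only [hZZbar, hZbarZ, hZnormSq, Finset.sum_const, Finset.card_univ, Fintype.card_fin,
    nsmul_eq_mul, ← Finset.sum_div]
  rw [← ofReal_pow, heisRho_pow_four, ← mul_conj, ← ofReal_sum, hsum]
  simp only [map_div₀, map_one, map_mul, conj_ofNat]
  field_simp
  ring

theorem heisRho_pos (hp : p ≠ 0) : 0 < heisRho p := by
  rw [heisRho, ← normSq_heisW]
  exact Real.rpow_pos_of_pos (normSq_pos.2 (heisW_ne_zero hp)) _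

end

theorem stmt16_general {n : ℕ} (p : (Fin n → ℂ) × ℝ) (hp : p ≠ 0) :
    ((∑ a, (Zop a (Zbarop a heisU) p + Zbarop a (Zop a heisU) p))
        - 2 * (n : ℂ) * ∑ a, Zop a heisU p * conj (Zop a heisU p)
      = ((n : ℂ) / 2) * ((∑ a, Complex.normSq (p.1 a) : ℝ) : ℂ)
          / ((heisRho p : ℂ)) ^ 4) ∧
    (0 ≤ (n : ℝ) * (n + 1) * (∑ a, Complex.normSq (p.1 a))
        / (2 * (heisRho p) ^ 2)) ∧
    ((n : ℝ) * (n + 1) * (∑ a, Complex.normSq (p.1 a))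
        / (2 * (heisRho p) ^ 2) = 0 ↔ p.1 = 0) := by
  have hs : 0 ≤ ∑ a, Complex.normSq (p.1 a) := Finset.sum_nonneg fun a _ => Complex.normSq_nonneg _
  have hρ := heisRho_pos hp
  refine ⟨sublaplacian_log_heisRho hp, by positivity, ?_⟩
  rw [div_eq_zero_iff, or_iff_left (by positivity), mul_eq_zero, sum_normSq_eq_zero_iff]
  refine or_iff_right_of_imp fun hn => ?_
  obtain rfl : n = 0 := by exact_mod_cast (mul_eq_zero.1 hn).resolve_right (by positivity)
  exact Subsingleton.elim _ _

/-- The sublaplacian-type identity for `log ρ` on the Heisenberg group, and the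
consequent formula `R = n(n+1)|z|²/(2ρ²)` for the Tanaka–Webster scalar curvature of
`θ = ρ⁻²θ₀`: it is nonnegative and vanishes exactly where `z = 0`. -/
theorem stmt16 {n : ℕ} (hn : 0 < n) (p : (Fin n → ℂ) × ℝ) (hp : p ≠ 0) :
    ((∑ a, (Zop a (Zbarop a heisU) p + Zbarop a (Zop a heisU) p))
        - 2 * (n : ℂ) * ∑ a, Zop a heisU p * conj (Zop a heisU p)
      = ((n : ℂ) / 2) * ((∑ a, Complex.normSq (p.1 a) : ℝ) : ℂ)
          / ((heisRho p : ℂ)) ^ 4) ∧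
    (0 ≤ (n : ℝ) * (n + 1) * (∑ a, Complex.normSq (p.1 a))
        / (2 * (heisRho p) ^ 2)) ∧
    ((n : ℝ) * (n + 1) * (∑ a, Complex.normSq (p.1 a))
        / (2 * (heisRho p) ^ 2) = 0 ↔ p.1 = 0) :=
  stmt16_general p hp
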